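/- Let k ≥ 1 and let (ℂ^{2k}, ω₁, ω₂) be the Jordan pair J_{2k,μ} for some μ ∈ ℂ, or the pair J_{2k,∞}. Suppose (β_i)_{i≥0} is a sequence of vectors in ℂ^{2k} such that ω₁(β₀, w) = 0 for all w ∈ ℂ^{2k}, and ω₂(β_i, w) = ω₁(β_{i+1}, w) for all w ∈ ℂ^{2k} and all i ≥ 0. Then β_i = 0 for every i ≥ 0. -/

import Mathlib

/-!
For finite `μ` the form `ω₂` is nondegenerate, so the chain reads `βᵢ = f βᵢ₊₁` with `f β₀ = 0`
for `f = ω₂⁻¹ω₁`. Then `βᵢ` lies in `ker fⁱ⁺¹` and in every `range fⁿ`, and these meet only in `0`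
by the Fitting decomposition. For `μ = ∞` the form `ω₁` is nondegenerate, so `β₀ = 0` and the
recursion propagates forwards.
-/

open Matrix

noncomputable section

def formOf {n : ℕ} (M : Matrix (Fin n) (Fin n) ℂ) (x y : Fin n → ℂ) : ℂ :=
  x ⬝ᵥ M.mulVec y

/-- The `k×k` Jordan block with eigenvalue `μ` (superdiagonal `1`). -/
def jordanBlk (k : ℕ) (μ : ℂ) : Matrix (Fin k) (Fin k) ℂ := fun i j =>
  if j = i then μ else if j.val = i.val + 1 then 1 else 0

def sumEquiv (k : ℕ) : (Fin k ⊕ Fin k) ≃ Fin (2 * k) :=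
  finSumFinEquiv.trans (finCongr (two_mul k).symm)

/-- First form of the Jordan pair `J_{2k,μ}`; `μ = none` means `μ = ∞`. -/
def jordanMat1 (k : ℕ) (μ : Option ℂ) : Matrix (Fin (2 * k)) (Fin (2 * k)) ℂ :=
  Matrix.reindex (sumEquiv k) (sumEquiv k)
    (match μ with
      | some m => Matrix.fromBlocks 0 (jordanBlk k m) (-(jordanBlk k m)ᵀ) 0
      | none => Matrix.fromBlocks 0 1 (-1) 0)

/-- Second form of the Jordan pair `J_{2k,μ}`; `μ = none` means `μ = ∞`. -/
def jordanMat2 (k : ℕ) (μ : Option ℂ) : Matrix (Fin (2 * k)) (Fin (2 * k)) ℂ :=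
  Matrix.reindex (sumEquiv k) (sumEquiv k)
    (match μ with
      | some _ => Matrix.fromBlocks 0 1 (-1) 0
      | none => Matrix.fromBlocks 0 (jordanBlk k 0) (-(jordanBlk k 0)ᵀ) 0)

theorem LinearMap.eq_zero_of_apply_succ_eq {R M : Type*} [Ring R] [AddCommGroup M] [Module R M]
    [IsArtinian R M] [IsNoetherian R M] (f : Module.End R M) (v : ℕ → M)
    (h₀ : f (v 0) = 0) (hv : ∀ i, f (v (i + 1)) = v i) : v = 0 := by
  have hker : ∀ i, (f ^ (i + 1)) (v i) = 0 := by
    intro i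
    induction i with
    | zero => simpa using h₀
    | succ i ih => rwa [pow_succ, Module.End.mul_apply, hv]
  have hrange : ∀ n i, (f ^ n) (v (i + n)) = v i := by
    intro n
    induction n with
    | zero => simp
    | succ n ih => intro i; rw [pow_succ, Module.End.mul_apply, ← add_assoc, hv, ih]
  funext i
  refine Submodule.disjoint_def.1 (LinearMap.isCompl_iSup_ker_pow_iInf_range_pow f).disjoint _
    (Submodule.mem_iSup_of_mem (i + 1) (hker i)) (Submodule.mem_iInf _ |>.2 fun n => ?_)
  exact ⟨_, hrange n i⟩

section VecMulChain

variable {K n : Type*} [Fintype n] [DecidableEq n]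

theorem Matrix.vecMul_chain_eq_zero_of_isUnit_right [CommRing K] [IsArtinianRing K]
    {A B : Matrix n n K} (hB : IsUnit B) {β : ℕ → n → K}
    (h₀ : β 0 ᵥ* A = 0) (h : ∀ i, β i ᵥ* B = β (i + 1) ᵥ* A) : β = 0 := by
  refine (A * B⁻¹).vecMulLinear.eq_zero_of_apply_succ_eq β ?_ fun i => ?_
  · rw [vecMulLinear_apply, ← vecMul_vecMul, h₀, zero_vecMul]
  · rw [vecMulLinear_apply, ← vecMul_vecMul, ← h, vecMul_vecMul,
      mul_nonsing_inv _ ((isUnit_iff_isUnit_det B).1 hB), vecMul_one]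

theorem Matrix.vecMul_chain_eq_zero_of_isUnit_left [CommRing K] {A B : Matrix n n K}
    (hA : IsUnit A) {β : ℕ → n → K}
    (h₀ : β 0 ᵥ* A = 0) (h : ∀ i, β i ᵥ* B = β (i + 1) ᵥ* A) : β = 0 := by
  have hβ : ∀ i, β i = 0 := by
    intro i
    induction i with
    | zero => exact vecMul_injective_of_isUnit hA (h₀.trans (zero_vecMul A).symm)
    | succ i ih => exact vecMul_injective_of_isUnit hA ((h i).symm.trans (by simp [ih]))
  exact funext hβ

end VecMulChain

theorem Matrix.isUnit_reindex_fromBlocks_zero_one {l m R : Type*} [Fintype l] [DecidableEq l]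
    [Fintype m] [DecidableEq m] [CommRing R] (e : l ⊕ l ≃ m) :
    IsUnit (reindex e e (fromBlocks 0 1 (-1) 0 : Matrix (l ⊕ l) (l ⊕ l) R)) := by
  have hJ : IsUnit (J l R) := (isUnit_iff_isUnit_det _).2 (isUnit_det_J l R)
  rw [reindex_apply, isUnit_submatrix_equiv, ← neg_neg (fromBlocks _ _ _ _), fromBlocks_neg]
  simpa [J] using hJ.neg

theorem forall_formOf_eq_iff {n : ℕ} {M N : Matrix (Fin n) (Fin n) ℂ} {x y : Fin n → ℂ} :
    (∀ w, formOf M x w = formOf N y w) ↔ x ᵥ* M = y ᵥ* N := by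
  simp only [formOf, dotProduct_mulVec, dotProduct_eq_iff]

theorem forall_formOf_eq_zero_iff {n : ℕ} {M : Matrix (Fin n) (Fin n) ℂ} {x : Fin n → ℂ} :
    (∀ w, formOf M x w = 0) ↔ x ᵥ* M = 0 := by
  simp only [formOf, dotProduct_mulVec, dotProduct_eq_zero_iff]

theorem jordan_lenard_chain_vanishes_general (k : ℕ) (μ : Option ℂ)
    (β : ℕ → Fin (2 * k) → ℂ)
    (hanch : ∀ w, formOf (jordanMat1 k μ) (β 0) w = 0)
    (hrec : ∀ i w, formOf (jordanMat2 k μ) (β i) w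
        = formOf (jordanMat1 k μ) (β (i + 1)) w) :
    ∀ i, β i = 0 := by
  have h₀ := forall_formOf_eq_zero_iff.1 hanch
  have h := fun i => forall_formOf_eq_iff.1 (hrec i)
  have hJ := isUnit_reindex_fromBlocks_zero_one (R := ℂ) (sumEquiv k)
  refine congrFun ?_
  cases μ with
  | some _ => exact vecMul_chain_eq_zero_of_isUnit_right hJ h₀ h
  | none => exact vecMul_chain_eq_zero_of_isUnit_left hJ h₀ h

/-- an anchored Lenard chain on a Jordan pair vanishes. -/
theorem jordan_lenard_chain_vanishes (k : ℕ) (hk : 1 ≤ k) (μ : Option ℂ)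
    (β : ℕ → Fin (2 * k) → ℂ)
    (hanch : ∀ w, formOf (jordanMat1 k μ) (β 0) w = 0)
    (hrec : ∀ i w, formOf (jordanMat2 k μ) (β i) w
        = formOf (jordanMat1 k μ) (β (i + 1)) w) :
    ∀ i, β i = 0 :=
  jordan_lenard_chain_vanishes_general k μ β hanch hrec
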